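/- arXiv:1902.07884 — 5 statements merged into one kernel-verified Lean document; each statement's English description precedes it below -/
import Mathlib

section
/- The function α(β) = β²/2 + log Φ̄((τ-β)/√(1+η²)), where Φ̄ is the standard normal survival function, is strongly convex on ℝ with convexity parameter η²/(1+η²); i.e., α''(β) ≥ η²/(1+η²) for all β ∈ ℝ. -/
noncomputable def phi (x : ℝ) : ℝ := (Real.sqrt (2 * Real.pi))⁻¹ * Real.exp (-x ^ 2 / 2)

noncomputable def Phibar (x : ℝ) : ℝ := ∫ t in Set.Ioi x, phi t

/-!
With `r = φ/Φ̄` the inverse Mills ratio and `u = (τ - β)/√(1+η²)`, the chain rule gives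
`α''(β) = 1 - r(u)(r(u) - u)/(1+η²)`, so it suffices that `r(u)(r(u) - u) ≤ 1`. Now
`1 - r(u)(r(u) - u)` is the variance `∫_{t>u} (t - r(u))² φ(t) dt / Φ̄(u)` of a standard normal
conditioned on `Z > u`, hence nonnegative; the integral is evaluated through an explicit
antiderivative of `(t - m)² φ(t)`.
-/

open Real MeasureTheory Filter Set Topology

lemma phi_eq_mul_exp (x : ℝ) : phi x = (√(2 * π))⁻¹ * rexp (-(1 / 2) * x ^ 2) := by
  rw [phi]; ring_nf

lemma phi_pos (x : ℝ) : 0 < phi x := by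
  unfold phi; positivity

lemma continuous_phi : Continuous phi := by
  unfold phi; fun_prop

lemma integrable_phi : Integrable phi := by
  rw [funext phi_eq_mul_exp]
  exact (integrable_exp_neg_mul_sq (by norm_num : (0 : ℝ) < 1 / 2)).const_mul _

lemma hasDerivAt_phi (x : ℝ) : HasDerivAt phi (-x * phi x) x := by
  refine ((((hasDerivAt_pow 2 x).neg.div_const 2).exp).const_mul (√(2 * π))⁻¹).congr_deriv ?_
  simp only [phi, Pi.neg_apply]
  ring

lemma tendsto_pow_mul_phi_atTop (n : ℕ) : Tendsto (fun t => t ^ n * phi t) atTop (𝓝 0) := by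
  have h := ((tendsto_rpow_abs_mul_exp_neg_mul_sq_cocompact (by norm_num : (0 : ℝ) < 1 / 2)
    n).mono_left atTop_le_cocompact).const_mul (√(2 * π))⁻¹
  rw [mul_zero] at h
  refine h.congr' ?_
  filter_upwards [eventually_ge_atTop 0] with t ht
  rw [abs_of_nonneg ht, rpow_natCast, phi_eq_mul_exp]; ring

lemma Phibar_pos (x : ℝ) : 0 < Phibar x := by
  refine (setIntegral_pos_iff_support_of_nonneg_ae
    (Eventually.of_forall fun t => (phi_pos t).le) integrable_phi.integrableOn).2 ?_
  rw [Function.support_eq_univ fun t => (phi_pos t).ne', univ_inter]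
  simp

lemma Phibar_eq_sub_integral (x : ℝ) : Phibar x = Phibar 0 - ∫ t in 0..x, phi t := by
  rw [← intervalIntegral.integral_Ioi_sub_Ioi' integrable_phi.integrableOn
    integrable_phi.integrableOn, Phibar, Phibar, sub_sub_cancel]

lemma hasDerivAt_Phibar (x : ℝ) : HasDerivAt Phibar (-phi x) x := by
  have := (intervalIntegral.integral_hasDerivAt_right (a := 0) (b := x)
    integrable_phi.intervalIntegrable
    (continuous_phi.stronglyMeasurableAtFilter _ _) continuous_phi.continuousAt).const_sub (Phibar 0)
  rwa [← funext Phibar_eq_sub_integral] at this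

lemma tendsto_Phibar_atTop : Tendsto Phibar atTop (𝓝 0) := by
  have := (intervalIntegral_tendsto_integral_Ioi 0 integrable_phi.integrableOn
    tendsto_id).const_sub (Phibar 0)
  rw [← Phibar, sub_self] at this
  exact this.congr fun x => (Phibar_eq_sub_integral x).symm

/-- `t ↦ (2m - t) φ(t) - (1 + m²) Φ̄(t)` has derivative `(t - m)² φ(t) ≥ 0` and vanishes at `∞`. -/
lemma two_mul_sub_mul_phi_le (m u : ℝ) : (2 * m - u) * phi u ≤ (1 + m ^ 2) * Phibar u := by
  set F : ℝ → ℝ := fun t => (2 * m - t) * phi t - (1 + m ^ 2) * Phibar t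
  have hF : ∀ t, HasDerivAt F ((t - m) ^ 2 * phi t) t := fun t => by
    refine ((((hasDerivAt_id' t).const_sub (2 * m)).mul (hasDerivAt_phi t)).sub
      ((hasDerivAt_Phibar t).const_mul (1 + m ^ 2))).congr_deriv ?_
    ring
  have hmono : Monotone F :=
    monotone_of_hasDerivAt_nonneg hF fun t => mul_nonneg (sq_nonneg _) (phi_pos t).le
  have hlim : Tendsto F atTop (𝓝 0) := by
    have := (((tendsto_pow_mul_phi_atTop 0).const_mul (2 * m)).sub
      (tendsto_pow_mul_phi_atTop 1)).sub (tendsto_Phibar_atTop.const_mul (1 + m ^ 2))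
    simp only [mul_zero, sub_zero] at this
    refine this.congr fun t => ?_
    simp only [F]; ring
  have := hmono.ge_of_tendsto hlim u
  simp only [F] at this
  linarith

noncomputable def millsRatio (u : ℝ) : ℝ := phi u / Phibar u

lemma millsRatio_mul_sub_le_one (u : ℝ) : millsRatio u * (millsRatio u - u) ≤ 1 := by
  have hP := Phibar_pos u
  have hphi : phi u = millsRatio u * Phibar u := by
    rw [millsRatio, div_mul_cancel₀ _ hP.ne']
  have h := two_mul_sub_mul_phi_le (millsRatio u) u
  rw [hphi, ← mul_assoc] at h
  linear_combination le_of_mul_le_mul_right h hP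

lemma hasDerivAt_millsRatio (u : ℝ) :
    HasDerivAt millsRatio (millsRatio u * (millsRatio u - u)) u := by
  have hP := (Phibar_pos u).ne'
  refine ((hasDerivAt_phi u).div (hasDerivAt_Phibar u) hP).congr_deriv ?_
  rw [millsRatio]
  field_simp
  ring

lemma hasDerivAt_log_Phibar (x : ℝ) :
    HasDerivAt (fun x => log (Phibar x)) (-millsRatio x) x := by
  simpa only [millsRatio, neg_div] using (hasDerivAt_Phibar x).log (Phibar_pos x).ne'

lemma deriv_deriv_half_sq_add_log_Phibar (τ c β : ℝ) :
    deriv (deriv fun b : ℝ => b ^ 2 / 2 + log (Phibar ((τ - b) / c))) β =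
      1 - millsRatio ((τ - β) / c) * (millsRatio ((τ - β) / c) - (τ - β) / c) / c ^ 2 := by
  have hu : ∀ b : ℝ, HasDerivAt (fun b => (τ - b) / c) (-1 / c) b := fun b => by
    simpa only [neg_div] using ((hasDerivAt_id' b).const_sub τ).div_const c
  have hderiv : deriv (fun b : ℝ => b ^ 2 / 2 + log (Phibar ((τ - b) / c))) =
      fun b => b + millsRatio ((τ - b) / c) / c := by
    funext b
    refine HasDerivAt.deriv ?_
    refine (((hasDerivAt_pow 2 b).div_const 2).add
      ((hasDerivAt_log_Phibar _).comp b (hu b))).congr_deriv ?_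
    field_simp
    ring
  rw [hderiv]
  refine HasDerivAt.deriv ?_
  refine ((hasDerivAt_id' β).add
    (((hasDerivAt_millsRatio _).comp β (hu β)).div_const c)).congr_deriv ?_
  field_simp
  ring

theorem stmt0_general (τ η : ℝ) (β : ℝ) :
    η ^ 2 / (1 + η ^ 2) ≤
      deriv (deriv (fun b : ℝ =>
        b ^ 2 / 2 + Real.log (Phibar ((τ - b) / Real.sqrt (1 + η ^ 2))))) β := by
  have hpos : 0 < 1 + η ^ 2 := by positivity
  rw [deriv_deriv_half_sq_add_log_Phibar, sq_sqrt hpos.le]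
  calc η ^ 2 / (1 + η ^ 2) = 1 - 1 / (1 + η ^ 2) := by field_simp; ring
    _ ≤ _ := by gcongr; exact millsRatio_mul_sub_le_one _

/-- The function `α(β) = β²/2 + log Φ̄((τ-β)/√(1+η²))` is strongly convex with
parameter `η²/(1+η²)`: its second derivative is bounded below by `η²/(1+η²)`. -/
theorem stmt0 (τ η : ℝ) (hη : 0 < η) (β : ℝ) :
    η ^ 2 / (1 + η ^ 2) ≤
      deriv (deriv (fun b : ℝ =>
        b ^ 2 / 2 + Real.log (Phibar ((τ - b) / Real.sqrt (1 + η ^ 2))))) β :=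
  stmt0_general τ η β
end

section
/- For a standard normal random variable, the variance of the truncated distribution conditioned on lying in a half-line is at most 1: if Z ~ N(0,1) and τ ∈ ℝ, then Var(Z | Z > τ) ≤ 1. -/
/-!
Integrating by parts against `φ' = -x φ` gives `∫_τ^∞ x φ = φ(τ)` and
`∫_τ^∞ x² φ = Φ̄(τ) + τ φ(τ)`. Hence the conditional mean `m = φ(τ) / Φ̄(τ)` satisfies
`E[Z² | Z > τ] = 1 + τ m`, so `Var(Z | Z > τ) = 1 - m (m - τ)`. Both factors are nonnegative:
`m ≥ 0` from the formula, and `m ≥ τ` because the conditional law lives on `(τ, ∞)`.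
-/

open MeasureTheory ProbabilityTheory Filter Set Topology Real

local notation "φ" => gaussianPDFReal 0 1

lemma gaussianPDFReal_zero_one_eq (x : ℝ) :
    φ x = (√(2 * π))⁻¹ * exp (-(1 / 2) * x ^ 2) := by
  simp only [gaussianPDFReal, NNReal.coe_one, mul_one, sub_zero]
  ring_nf

lemma hasDerivAt_gaussianPDFReal_zero_one (x : ℝ) : HasDerivAt φ (-x * φ x) x := by
  have h := (((hasDerivAt_pow 2 x).const_mul (-(1 / 2) : ℝ)).exp).const_mul (√(2 * π))⁻¹
  rw [← funext gaussianPDFReal_zero_one_eq] at h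
  refine h.congr_deriv ?_
  rw [gaussianPDFReal_zero_one_eq]
  push_cast
  ring

lemma integrable_pow_mul_gaussianPDFReal_zero_one (n : ℕ) :
    Integrable fun x : ℝ ↦ x ^ n * φ x := by
  have h := (integrable_rpow_mul_exp_neg_mul_sq (b := 1 / 2) (by norm_num)
    (s := n) (by linarith [n.cast_nonneg (α := ℝ)])).const_mul (√(2 * π))⁻¹
  refine h.congr (ae_of_all _ fun x ↦ ?_)
  simp only [rpow_natCast, gaussianPDFReal_zero_one_eq]
  ring

lemma tendsto_pow_mul_gaussianPDFReal_zero_one_atTop (n : ℕ) :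
    Tendsto (fun x : ℝ ↦ x ^ n * φ x) atTop (𝓝 0) := by
  have hexp : Tendsto (fun x : ℝ ↦ exp (-(1 / 2) * x)) atTop (𝓝 0) :=
    tendsto_exp_atBot.comp (tendsto_id.const_mul_atTop_of_neg (by norm_num))
  have h := ((rpow_mul_exp_neg_mul_sq_isLittleO_exp_neg (b := 1 / 2) (by norm_num) n).trans_tendsto
    hexp).const_mul (√(2 * π))⁻¹
  rw [mul_zero] at h
  refine h.congr fun x ↦ ?_
  simp only [rpow_natCast, gaussianPDFReal_zero_one_eq]
  ring

lemma setIntegral_gaussianReal_zero_one {s : Set ℝ} (hs : MeasurableSet s) (f : ℝ → ℝ) :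
    ∫ x in s, f x ∂gaussianReal 0 1 = ∫ x in s, φ x * f x := by
  rw [gaussianReal_of_var_ne_zero 0 one_ne_zero, setIntegral_withDensity_eq_setIntegral_toReal_smul
    (measurable_gaussianPDF 0 1) (ae_of_all _ fun _ ↦ gaussianPDF_lt_top) f hs]
  simp only [toReal_gaussianPDF, smul_eq_mul]

lemma setIntegral_Ioi_id_gaussianReal_zero_one (τ : ℝ) :
    ∫ x in Ioi τ, x ∂gaussianReal 0 1 = φ τ := by
  rw [setIntegral_gaussianReal_zero_one measurableSet_Ioi]
  have h := integral_Ioi_of_hasDerivAt_of_tendsto' (f := fun x ↦ -φ x) (f' := fun x ↦ φ x * x)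
    (a := τ) (fun x _ ↦ (hasDerivAt_gaussianPDFReal_zero_one x).neg.congr_deriv (by ring))
    (by simpa [mul_comm] using (integrable_pow_mul_gaussianPDFReal_zero_one 1).integrableOn)
    (by simpa using (tendsto_pow_mul_gaussianPDFReal_zero_one_atTop 0).neg)
  simpa using h

lemma setIntegral_Ioi_sq_gaussianReal_zero_one (τ : ℝ) :
    ∫ x in Ioi τ, x ^ 2 ∂gaussianReal 0 1 = (gaussianReal 0 1).real (Ioi τ) + τ * φ τ := by
  have hderiv (x : ℝ) : HasDerivAt (fun y ↦ -(y * φ y)) (φ x * x ^ 2 - φ x) x := by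
    refine ((hasDerivAt_id x).mul (hasDerivAt_gaussianPDFReal_zero_one x)).neg.congr_deriv ?_
    simp only [id]
    ring
  have hint_sq : IntegrableOn (fun x ↦ φ x * x ^ 2) (Ioi τ) := by
    simpa [mul_comm] using (integrable_pow_mul_gaussianPDFReal_zero_one 2).integrableOn
  have hint : IntegrableOn φ (Ioi τ) := (integrable_gaussianPDFReal 0 1).integrableOn
  have hmass : ∫ x in Ioi τ, φ x = (gaussianReal 0 1).real (Ioi τ) := by
    simpa using (setIntegral_gaussianReal_zero_one measurableSet_Ioi fun _ ↦ (1 : ℝ)).symm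
  have h := integral_Ioi_of_hasDerivAt_of_tendsto' (a := τ) (fun x _ ↦ hderiv x)
    (hint_sq.sub hint) (by simpa using (tendsto_pow_mul_gaussianPDFReal_zero_one_atTop 1).neg)
  rw [integral_sub hint_sq hint, hmass,
    ← setIntegral_gaussianReal_zero_one measurableSet_Ioi] at h
  linarith

lemma gaussianReal_Ioi_ne_zero (μ : ℝ) {v : NNReal} (hv : v ≠ 0) (τ : ℝ) :
    gaussianReal μ v (Ioi τ) ≠ 0 := fun h ↦ by
  simpa using gaussianReal_absolutelyContinuous' μ hv h

lemma integral_cond {Ω : Type*} [MeasurableSpace Ω] (μ : Measure Ω) (s : Set Ω) (f : Ω → ℝ) :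
    ∫ x, f x ∂μ[|s] = (μ.real s)⁻¹ * ∫ x in s, f x ∂μ := by
  rw [ProbabilityTheory.cond, integral_smul_measure, ENNReal.toReal_inv, smul_eq_mul,
    measureReal_def]

lemma le_integral_id_cond_Ioi {μ : Measure ℝ} [IsFiniteMeasure μ] {τ : ℝ}
    (hμ : μ (Ioi τ) ≠ 0) (hint : Integrable id (μ[|Ioi τ])) :
    τ ≤ ∫ x, x ∂μ[|Ioi τ] := by
  have := cond_isProbabilityMeasure hμ
  calc τ = ∫ _, τ ∂μ[|Ioi τ] := by simp
    _ ≤ ∫ x, x ∂μ[|Ioi τ] := integral_mono_ae (integrable_const τ) hint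
        ((ae_cond_mem measurableSet_Ioi).mono fun _ hx ↦ le_of_lt hx)

lemma memLp_id_cond_gaussianReal (τ : ℝ) (p : NNReal) :
    MemLp id p ((gaussianReal 0 1)[|Ioi τ]) :=
  ((memLp_id_gaussianReal p).restrict _).smul_measure
    (ENNReal.inv_ne_top.2 (gaussianReal_Ioi_ne_zero 0 one_ne_zero τ))

lemma integral_id_cond_Ioi_gaussianReal (τ : ℝ) :
    ∫ x, x ∂(gaussianReal 0 1)[|Ioi τ] = φ τ / (gaussianReal 0 1).real (Ioi τ) := by
  rw [integral_cond, setIntegral_Ioi_id_gaussianReal_zero_one, inv_mul_eq_div]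

lemma integral_sq_cond_Ioi_gaussianReal (τ : ℝ) :
    ∫ x, x ^ 2 ∂(gaussianReal 0 1)[|Ioi τ] = 1 + τ * ∫ x, x ∂(gaussianReal 0 1)[|Ioi τ] := by
  have hmass : 0 < (gaussianReal 0 1).real (Ioi τ) :=
    ENNReal.toReal_pos (gaussianReal_Ioi_ne_zero 0 one_ne_zero τ) (measure_ne_top _ _)
  rw [integral_cond, setIntegral_Ioi_sq_gaussianReal_zero_one,
    integral_id_cond_Ioi_gaussianReal]
  field_simp

/-- Conditioning a standard normal on a half-line `(τ, ∞)` does not increase its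
variance above 1: `Var(Z | Z > τ) ≤ 1`. -/
theorem stmt1 (τ : ℝ) :
    variance id (ProbabilityTheory.cond (gaussianReal 0 1) (Set.Ioi τ)) ≤ 1 := by
  have hmem := memLp_id_cond_gaussianReal τ 2
  have hmean_nonneg : 0 ≤ ∫ x, x ∂(gaussianReal 0 1)[|Ioi τ] := by
    rw [integral_id_cond_Ioi_gaussianReal]
    exact div_nonneg (gaussianPDFReal_nonneg 0 1 τ) measureReal_nonneg
  have hτ_le_mean := le_integral_id_cond_Ioi (gaussianReal_Ioi_ne_zero 0 one_ne_zero τ)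
    (hmem.integrable one_le_two)
  have := cond_isProbabilityMeasure (gaussianReal_Ioi_ne_zero 0 one_ne_zero τ)
  rw [variance_eq_sub hmem]
  change ∫ x, x ^ 2 ∂(gaussianReal 0 1)[|Ioi τ] - (∫ x, x ∂(gaussianReal 0 1)[|Ioi τ]) ^ 2 ≤ 1
  rw [integral_sq_cond_Ioi_gaussianReal]
  linarith [mul_nonneg hmean_nonneg (sub_nonneg.2 hτ_le_mean)]
end

section
/- Let f: ℝⁿ → ℝ be differentiable and strongly convex with parameter K > 0. Then its convex conjugate f* has gradient ∇f* that is Lipschitz continuous with constant 1/K: for all x, y, ‖∇f*(x) - ∇f*(y)‖ ≤ (1/K)‖x - y‖. -/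
/-!
Since `f*` is a supremum of affine functions it is convex, so its gradient `u = ∇f* z` is a
subgradient: `f* w ≥ f* z + ⟪u, w - z⟫`. Taking `w = ∇f u`, where the conjugate is attained at
`u`, shows that `u` maximizes `⟪z, ·⟫ - f`, hence `∇f (∇f* z) = z`. Adding the strong convexity
inequality at `u, v` and at `v, u` makes `∇f` strongly monotone,
`K ‖u - v‖² ≤ ⟪∇f u - ∇f v, u - v⟫`, and with `u = ∇f* x`, `v = ∇f* y` Cauchy–Schwarz gives
`K ‖u - v‖ ≤ ‖x - y‖`.
-/

open Set InnerProductSpace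
open scoped RealInnerProductSpace

variable {F : Type*} [NormedAddCommGroup F] [InnerProductSpace ℝ F]

def IsConvexConjugate (f fstar : F → ℝ) : Prop :=
  ∀ z, IsLUB (range fun x ↦ ⟪z, x⟫ - f x) (fstar z)

namespace IsConvexConjugate

variable {f fstar : F → ℝ}

theorem inner_sub_le (h : IsConvexConjugate f fstar) (z x : F) : ⟪z, x⟫ - f x ≤ fstar z :=
  (h z).1 ⟨x, rfl⟩

theorem convexOn (h : IsConvexConjugate f fstar) : ConvexOn ℝ univ fstar := by
  refine ⟨convex_univ, fun z _ w _ a b ha hb hab ↦ (h _).2 ?_⟩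
  rintro _ ⟨x, rfl⟩
  have hz := mul_le_mul_of_nonneg_left (h.inner_sub_le z x) ha
  have hw := mul_le_mul_of_nonneg_left (h.inner_sub_le w x) hb
  simp only [inner_add_left, real_inner_smul_left, smul_eq_mul]
  linear_combination hz + hw + f x * hab

theorem apply_eq_of_forall_add_inner_le (h : IsConvexConjugate f fstar) {z x : F}
    (hzx : ∀ y, f x + ⟪z, y - x⟫ ≤ f y) : fstar z = ⟪z, x⟫ - f x := by
  refine (h z).unique (IsGreatest.isLUB ⟨⟨x, rfl⟩, ?_⟩)
  rintro _ ⟨y, rfl⟩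
  have := hzx y
  rw [inner_sub_right] at this
  linarith

end IsConvexConjugate

theorem norm_sub_le_of_mul_sq_le_inner {K : ℝ} (hK : 0 < K) {a b u v : F}
    (h : K * ‖u - v‖ ^ 2 ≤ ⟪a - b, u - v⟫) : ‖u - v‖ ≤ 1 / K * ‖a - b‖ := by
  rcases (norm_nonneg (u - v)).eq_or_lt with h0 | hpos
  · rw [← h0]
    positivity
  · have hCS := real_inner_le_norm (a - b) (u - v)
    have : K * ‖u - v‖ ≤ ‖a - b‖ := le_of_mul_le_mul_right (by nlinarith) hpos
    rw [one_div_mul_eq_div, le_div_iff₀ hK]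
    linarith

section Gradient

variable [CompleteSpace F]

theorem IsLocalMin.hasGradientAt_eq_zero {g : F → ℝ} {g' a : F} (h : IsLocalMin g a)
    (hg : HasGradientAt g g' a) : g' = 0 := by
  have h0 : toDual ℝ F g' = 0 := h.hasFDerivAt_eq_zero hg.hasFDerivAt
  simpa using h0

theorem HasGradientAt.eq_of_isMinOn_sub_inner {g : F → ℝ} {g' z x : F}
    (hg : HasGradientAt g g' x) (hmin : IsMinOn (fun y ↦ g y - ⟪z, y⟫) univ x) : g' = z := by
  have hgrad : HasGradientAt (fun y ↦ g y - ⟪z, y⟫) (g' - z) x := by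
    rw [hasGradientAt_iff_hasFDerivAt] at hg ⊢
    rw [map_sub]
    exact hg.sub (toDual ℝ F z).hasFDerivAt
  exact sub_eq_zero.mp ((hmin.isLocalMin Filter.univ_mem).hasGradientAt_eq_zero hgrad)

theorem ConvexOn.add_inner_sub_le_of_hasGradientAt {g : F → ℝ} {g' z : F}
    (hg : ConvexOn ℝ univ g) (hg' : HasGradientAt g g' z) (w : F) :
    g z + ⟪g', w - z⟫ ≤ g w := by
  let ℓ : ℝ →ᵃ[ℝ] F := AffineMap.lineMap z w
  have hderiv : HasDerivAt (g ∘ ℓ) ⟪g', w - z⟫ 0 := by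
    have hg'' : HasFDerivAt g (toDual ℝ F g') (ℓ 0) := by
      simpa [ℓ] using hg'.hasFDerivAt
    simpa using hg''.comp_hasDerivAt (0 : ℝ) AffineMap.hasDerivAt_lineMap
  have hslope := (hg.comp_affineMap ℓ).le_slope_of_hasDerivAt (mem_univ 0) (mem_univ 1)
    one_pos hderiv
  simp only [slope_def_field, Function.comp_apply, AffineMap.lineMap_apply_one,
    AffineMap.lineMap_apply_zero, sub_zero, div_one, ℓ] at hslope
  linarith

theorem IsConvexConjugate.gradient_gradient {f fstar : F → ℝ} (h : IsConvexConjugate f fstar)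
    (hf : ∀ x y, f x + ⟪gradient f x, y - x⟫ ≤ f y) {z : F}
    (hfd : DifferentiableAt ℝ f (gradient fstar z)) (hd : DifferentiableAt ℝ fstar z) :
    gradient f (gradient fstar z) = z := by
  set u := gradient fstar z
  have hfoc : fstar z + ⟪u, gradient f u - z⟫ ≤ fstar (gradient f u) :=
    h.convexOn.add_inner_sub_le_of_hasGradientAt hd.hasGradientAt _
  rw [h.apply_eq_of_forall_add_inner_le (hf u), inner_sub_right, real_inner_comm u] at hfoc
  refine hfd.hasGradientAt.eq_of_isMinOn_sub_inner fun y _ ↦ ?_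
  have := h.inner_sub_le z y
  have := real_inner_comm u z
  show f u - ⟪z, u⟫ ≤ f y - ⟪z, y⟫
  linarith

theorem mul_sq_norm_sub_le_inner_gradient_sub {K : ℝ} {f : F → ℝ}
    (hsc : ∀ x y, f x + ⟪gradient f x, y - x⟫ + K / 2 * ‖y - x‖ ^ 2 ≤ f y) (x y : F) :
    K * ‖x - y‖ ^ 2 ≤ ⟪gradient f x - gradient f y, x - y⟫ := by
  have hxy := hsc x y
  have hyx := hsc y x
  rw [norm_sub_rev, ← neg_sub x y, inner_neg_right] at hxy
  rw [inner_sub_left]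
  linarith

end Gradient

/-- If `f : ℝⁿ → ℝ` is differentiable and `K`-strongly convex, then the gradient of its
convex conjugate `f*` (assumed finite and differentiable) is Lipschitz with constant `1/K`. -/
theorem stmt4 {n : ℕ} (K : ℝ) (hK : 0 < K)
    (f fstar : EuclideanSpace ℝ (Fin n) → ℝ)
    (hf : Differentiable ℝ f)
    (hsc : ∀ x y, f x + inner (𝕜 := ℝ) (gradient f x) (y - x) + K / 2 * ‖y - x‖ ^ 2 ≤ f y)
    (hconj : ∀ z, IsLUB (Set.range fun x => inner (𝕜 := ℝ) z x - f x) (fstar z))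
    (hdstar : Differentiable ℝ fstar) :
    ∀ x y, ‖gradient fstar x - gradient fstar y‖ ≤ (1 / K) * ‖x - y‖ := by
  have hconv : ∀ x y, f x + ⟪gradient f x, y - x⟫ ≤ f y := fun x y ↦
    (le_add_of_nonneg_right (by positivity)).trans (hsc x y)
  have hinv : ∀ z, gradient f (gradient fstar z) = z := fun z ↦
    IsConvexConjugate.gradient_gradient hconj hconv (hf _) (hdstar z)
  intro x y
  apply norm_sub_le_of_mul_sq_le_inner hK
  simpa only [hinv] using
    mul_sq_norm_sub_le_inner_gradient_sub hsc (gradient fstar x) (gradient fstar y)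
end

section
/- Let X ~ N(μ, σ²) on ℝ and C ⊆ ℝ be a convex set (interval) with P(X ∈ C) > 0. Then Var(X | X ∈ C) ≤ Var(X) = σ². -/
/-!
For independent `X, Y` with law `P`, `Var P = E (X - Y)² / 2`. When `P` is `N(m, v)` conditioned
on `C`, the substitution `x = c + d, y = c - d` splits the Gaussian density `f`,
`f (c + d) f (c - d) = f c ² e^{-d²/v}`, so `E [(X - Y)² - 2v]` becomes an integral over `c` of
integrals over the slices `{d | c ± d ∈ C}`. Each slice is a symmetric interval, and over a
symmetric interval `∫ (1 - 2d²/v) e^{-d²/v} ≥ 0`: the integrand is the derivative of `d e^{-d²/v}`,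
so its integral over `ℝ` vanishes, and it is positive exactly near the origin.
-/

open MeasureTheory ProbabilityTheory Real Set
open scoped NNReal ENNReal

/-- Either `S` lies where `g ≥ 0`, or `S` contains that whole region and `Sᶜ` lies where `g ≤ 0`. -/
lemma setIntegral_nonneg_of_convex_of_neg_mem {g : ℝ → ℝ} (hg : Integrable g)
    (hg₀ : ∫ x, g x = 0) {r : ℝ} (hle : ∀ x, x ^ 2 ≤ r → 0 ≤ g x)
    (hlt : ∀ x, r < x ^ 2 → g x ≤ 0) {S : Set ℝ} (hS : Convex ℝ S)
    (hneg : ∀ x ∈ S, -x ∈ S) : 0 ≤ ∫ x in S, g x := by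
  have hSm : MeasurableSet S := hS.ordConnected.measurableSet
  by_cases hsmall : ∀ x ∈ S, x ^ 2 ≤ r
  · exact setIntegral_nonneg hSm fun x hx => hle x (hsmall x hx)
  push Not at hsmall
  obtain ⟨x, hxS, hrx⟩ := hsmall
  have habs : |x| ∈ S := by
    rcases abs_choice x with h | h <;> rw [h]
    exacts [hxS, hneg x hxS]
  have hcompl : ∫ y in Sᶜ, g y ≤ 0 := by
    refine setIntegral_nonpos hSm.compl fun y hy => hlt y ?_
    have hxy : |x| < |y| := by
      by_contra! h
      exact hy (hS.ordConnected.out (hneg _ habs) habs (abs_le.mp h))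
    linarith [sq_lt_sq.mpr hxy]
  linarith [integral_add_compl hSm hg]

lemma hasDerivAt_mul_exp_neg_mul_sq (b x : ℝ) :
    HasDerivAt (fun x => x * exp (-b * x ^ 2)) ((1 - 2 * b * x ^ 2) * exp (-b * x ^ 2)) x := by
  refine ((hasDerivAt_id' x).mul ((hasDerivAt_pow 2 x).const_mul (-b)).exp).congr_deriv ?_
  push_cast
  ring

lemma integrable_one_sub_mul_sq_mul_exp_neg_mul_sq {b : ℝ} (hb : 0 < b) (a : ℝ) :
    Integrable fun x : ℝ => (1 - a * x ^ 2) * exp (-b * x ^ 2) := by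
  have hsq : Integrable fun x : ℝ => x ^ 2 * exp (-b * x ^ 2) := by
    have h := integrable_rpow_mul_exp_neg_mul_sq hb (s := 2) (by norm_num)
    norm_cast at h
  refine ((integrable_exp_neg_mul_sq hb).sub (hsq.const_mul a)).congr ?_
  filter_upwards with x
  simp only [Pi.sub_apply]
  ring

lemma setIntegral_one_sub_two_mul_sq_mul_exp_neg_mul_sq_nonneg {b : ℝ} (hb : 0 < b)
    {S : Set ℝ} (hS : Convex ℝ S) (hneg : ∀ x ∈ S, -x ∈ S) :
    0 ≤ ∫ x in S, (1 - 2 * b * x ^ 2) * exp (-b * x ^ 2) := by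
  refine setIntegral_nonneg_of_convex_of_neg_mem
    (integrable_one_sub_mul_sq_mul_exp_neg_mul_sq hb _)
    (integral_eq_zero_of_hasDerivAt_of_integrable (hasDerivAt_mul_exp_neg_mul_sq b)
      (integrable_one_sub_mul_sq_mul_exp_neg_mul_sq hb _) (integrable_mul_exp_neg_mul_sq hb))
    (r := 1 / (2 * b)) (fun x hx => ?_) (fun x hx => ?_) hS hneg
  · rw [le_div_iff₀ (by positivity)] at hx
    exact mul_nonneg (by linarith) (exp_pos _).le
  · rw [div_lt_iff₀ (by positivity)] at hx
    exact mul_nonpos_of_nonpos_of_nonneg (by linarith) (exp_pos _).le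

lemma integral_comp_add_sub {E : Type*} [NormedAddCommGroup E] [NormedSpace ℝ E]
    (G : ℝ × ℝ → E) : ∫ z, G z = (2 : ℝ) • ∫ z : ℝ × ℝ, G (z.1 + z.2, z.1 - z.2) := by
  set L : ℝ × ℝ →L[ℝ] ℝ × ℝ := (ContinuousLinearMap.fst ℝ ℝ ℝ + ContinuousLinearMap.snd ℝ ℝ ℝ).prod
      (ContinuousLinearMap.fst ℝ ℝ ℝ - ContinuousLinearMap.snd ℝ ℝ ℝ)
  have hL : ∀ z, L z = (z.1 + z.2, z.1 - z.2) := fun z => rfl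
  have hdet : L.det = -2 := by
    rw [ContinuousLinearMap.det, ← LinearMap.det_toMatrix (Module.Basis.finTwoProd ℝ),
      Matrix.det_fin_two]
    norm_num [LinearMap.toMatrix_apply, L]
  have hinj : Function.Injective L := by
    intro z w h
    simp only [hL, Prod.mk.injEq] at h
    ext <;> linarith [h.1, h.2]
  have hsurj : L '' univ = univ := by
    rw [image_univ, range_eq_univ]
    intro z
    exact ⟨((z.1 + z.2) / 2, (z.1 - z.2) / 2), by rw [hL]; ext <;> simp <;> ring⟩
  have := integral_image_eq_integral_abs_det_fderiv_smul volume MeasurableSet.univ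
    (fun z _ => L.hasFDerivWithinAt) hinj.injOn G
  rw [hsurj, setIntegral_univ, setIntegral_univ, hdet, integral_smul] at this
  simpa [hL] using this

lemma integral_prod_nonpos {α β : Type*} [MeasurableSpace α] [MeasurableSpace β]
    {μ : Measure α} {ν : Measure β} [SFinite μ] [SFinite ν] {H : α × β → ℝ}
    (h : ∀ a, ∫ b, H (a, b) ∂ν ≤ 0) : ∫ z, H z ∂(μ.prod ν) ≤ 0 := by
  by_cases hH : Integrable H (μ.prod ν)
  · rw [integral_prod H hH]
    exact integral_nonpos h
  · rw [integral_undef hH]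

lemma integral_sub_sq_prod_self {P : Measure ℝ} [IsProbabilityMeasure P] (hP : MemLp id 2 P) :
    ∫ z, (z.1 - z.2) ^ 2 ∂(P.prod P) = 2 * Var[id; P] := by
  have h1 : Integrable id P := hP.integrable one_le_two
  have h2 : Integrable (fun x : ℝ => x ^ 2) P := hP.integrable_sq
  have hfst := h2.comp_fst P
  have hsnd := h2.comp_snd P
  have hsum : Integrable (fun z : ℝ × ℝ => z.1 ^ 2 + z.2 ^ 2) (P.prod P) := hfst.add hsnd
  have hmul := (h1.mul_prod h1).const_mul 2
  calc ∫ z, (z.1 - z.2) ^ 2 ∂(P.prod P)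
      = ∫ z, (z.1 ^ 2 + z.2 ^ 2 - 2 * (id z.1 * id z.2)) ∂(P.prod P) := by
        congr 1; ext z; simp only [id]; ring
    _ = 2 * (∫ x, x ^ 2 ∂P - (∫ x, id x ∂P) ^ 2) := by
        rw [integral_sub hsum hmul, integral_add hfst hsnd, integral_const_mul,
          integral_prod_mul, integral_fun_fst (fun x : ℝ => x ^ 2),
          integral_fun_snd (fun x : ℝ => x ^ 2)]
        simp only [probReal_univ, one_smul]
        ring
    _ = 2 * Var[id; P] := by
        rw [variance_eq_sub hP]
        rfl

lemma variance_le_of_integral_sub_sq_sub_prod_nonpos {P : Measure ℝ} [IsProbabilityMeasure P]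
    (hP : MemLp id 2 P) {s : ℝ} (h : ∫ z, ((z.1 - z.2) ^ 2 - 2 * s) ∂(P.prod P) ≤ 0) :
    Var[id; P] ≤ s := by
  have hint : Integrable (fun z : ℝ × ℝ => (z.1 - z.2) ^ 2) (P.prod P) :=
    ((hP.comp_fst P).sub (hP.comp_snd P)).integrable_sq
  rw [integral_sub hint (integrable_const _), integral_sub_sq_prod_self hP] at h
  simp only [integral_const, probReal_univ, one_smul] at h
  linarith

lemma gaussianPDFReal_add_mul_gaussianPDFReal_sub (m : ℝ) (v : ℝ≥0) (c d : ℝ) :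
    gaussianPDFReal m v (c + d) * gaussianPDFReal m v (c - d)
      = gaussianPDFReal m v c ^ 2 * exp (-d ^ 2 / v) := by
  have key : -(c + d - m) ^ 2 / (2 * v) + -(c - d - m) ^ 2 / (2 * v)
      = (-(c - m) ^ 2 / (2 * v) + -(c - m) ^ 2 / (2 * v)) + -d ^ 2 / v := by
    ring
  simp only [gaussianPDFReal_def]
  rw [mul_mul_mul_comm, ← exp_add, key, exp_add, exp_add]
  ring

lemma integral_prod_withDensity_ofReal {α β : Type*} [MeasurableSpace α] [MeasurableSpace β]
    {μ : Measure α} {ν : Measure β} [SFinite μ] [SFinite ν] {w₁ : α → ℝ} {w₂ : β → ℝ}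
    (hw₁ : Measurable w₁) (hw₂ : Measurable w₂) (hw₁₀ : 0 ≤ w₁) (hw₂₀ : 0 ≤ w₂)
    (F : α × β → ℝ) :
    ∫ z, F z ∂((μ.withDensity fun x => ENNReal.ofReal (w₁ x)).prod
        (ν.withDensity fun y => ENNReal.ofReal (w₂ y)))
      = ∫ z, w₁ z.1 * w₂ z.2 * F z ∂(μ.prod ν) := by
  rw [prod_withDensity hw₁.ennreal_ofReal hw₂.ennreal_ofReal,
    integral_withDensity_eq_integral_toReal_smul (by fun_prop)
      (ae_of_all _ fun z => ENNReal.mul_lt_top ENNReal.ofReal_lt_top ENNReal.ofReal_lt_top)]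
  congr 1
  ext z
  rw [ENNReal.toReal_mul, ENNReal.toReal_ofReal (hw₁₀ _), ENNReal.toReal_ofReal (hw₂₀ _),
    smul_eq_mul]

lemma gaussianReal_restrict_eq_withDensity (m : ℝ) {v : ℝ≥0} (hv : v ≠ 0) {C : Set ℝ}
    (hC : MeasurableSet C) :
    (gaussianReal m v).restrict C
      = volume.withDensity fun x => ENNReal.ofReal (C.indicator (gaussianPDFReal m v) x) := by
  have h : (fun x => ENNReal.ofReal (C.indicator (gaussianPDFReal m v) x))
      = C.indicator (gaussianPDF m v) :=
    (indicator_comp_of_zero ENNReal.ofReal_zero).symm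
  rw [h, withDensity_indicator hC, gaussianReal_of_var_ne_zero m hv, restrict_withDensity hC]

lemma integral_gaussianPDFReal_indicator_add_mul_sub_nonpos (m : ℝ) {v : ℝ≥0} (hv : v ≠ 0)
    {C : Set ℝ} (hC : Convex ℝ C) (c : ℝ) :
    ∫ d, C.indicator (gaussianPDFReal m v) (c + d) * C.indicator (gaussianPDFReal m v) (c - d)
      * ((2 * d) ^ 2 - 2 * v) ≤ 0 := by
  set T := (fun d => c + d) ⁻¹' C
  have hS : Convex ℝ (T ∩ -T) :=
    (hC.translate_preimage_right c).inter (hC.translate_preimage_right c).neg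
  have hmem : ∀ d, d ∈ T ∩ -T ↔ c + d ∈ C ∧ c - d ∈ C := fun d => by
    simp [T, sub_eq_add_neg]
  have hneg : ∀ d ∈ T ∩ -T, -d ∈ T ∩ -T := fun d hd => by
    rw [hmem] at hd ⊢
    simpa [sub_eq_add_neg, and_comm] using hd
  have hv₀ : (0 : ℝ) < v := by positivity
  have hpt : ∀ d, C.indicator (gaussianPDFReal m v) (c + d)
      * C.indicator (gaussianPDFReal m v) (c - d) * ((2 * d) ^ 2 - 2 * v)
      = (T ∩ -T).indicator (fun d => -(2 * v * gaussianPDFReal m v c ^ 2)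
          * ((1 - 2 * (v : ℝ)⁻¹ * d ^ 2) * exp (-(v : ℝ)⁻¹ * d ^ 2))) d := by
    intro d
    by_cases hd : d ∈ T ∩ -T
    · obtain ⟨h₁, h₂⟩ := (hmem d).mp hd
      rw [indicator_of_mem h₁, indicator_of_mem h₂, indicator_of_mem hd,
        gaussianPDFReal_add_mul_gaussianPDFReal_sub,
        show -d ^ 2 / (v : ℝ) = -(v : ℝ)⁻¹ * d ^ 2 by ring]
      field_simp
      ring
    · rw [indicator_of_notMem hd]
      rcases not_and_or.mp (mt (hmem d).mpr hd) with h | h <;> simp [indicator_of_notMem h]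
  simp_rw [hpt]
  rw [integral_indicator (hS.ordConnected.measurableSet), integral_const_mul]
  exact mul_nonpos_of_nonpos_of_nonneg (neg_nonpos.mpr (by positivity))
    (setIntegral_one_sub_two_mul_sq_mul_exp_neg_mul_sq_nonneg (inv_pos.mpr hv₀) hS hneg)

lemma integral_sub_sq_sub_prod_gaussianReal_restrict_nonpos (m : ℝ) {v : ℝ≥0} (hv : v ≠ 0)
    {C : Set ℝ} (hC : Convex ℝ C) :
    ∫ z, ((z.1 - z.2) ^ 2 - 2 * v)
      ∂(((gaussianReal m v).restrict C).prod ((gaussianReal m v).restrict C)) ≤ 0 := by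
  have hCm : MeasurableSet C := hC.ordConnected.measurableSet
  have hw : Measurable (C.indicator (gaussianPDFReal m v)) :=
    (measurable_gaussianPDFReal m v).indicator hCm
  have hw₀ : 0 ≤ C.indicator (gaussianPDFReal m v) :=
    indicator_nonneg fun x _ => gaussianPDFReal_nonneg m v x
  rw [gaussianReal_restrict_eq_withDensity m hv hCm,
    integral_prod_withDensity_ofReal hw hw hw₀ hw₀, ← Measure.volume_eq_prod, integral_comp_add_sub]
  refine smul_nonpos_of_nonneg_of_nonpos zero_le_two ?_
  rw [Measure.volume_eq_prod]
  refine integral_prod_nonpos fun c => le_of_eq_of_le ?_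
    (integral_gaussianPDFReal_indicator_add_mul_sub_nonpos m hv hC c)
  congr 1
  ext d
  ring_nf

lemma variance_cond_gaussianReal_le (m : ℝ) {v : ℝ≥0} (hv : v ≠ 0) {C : Set ℝ}
    (hC : Convex ℝ C) (hpos : gaussianReal m v C ≠ 0) : Var[id; (gaussianReal m v)[|C]] ≤ v := by
  have := cond_isProbabilityMeasure hpos
  have hL2 : MemLp id 2 ((gaussianReal m v)[|C]) :=
    ((memLp_id_gaussianReal 2).restrict C).smul_measure (ENNReal.inv_ne_top.mpr hpos)
  refine variance_le_of_integral_sub_sq_sub_prod_nonpos hL2 ?_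
  rw [ProbabilityTheory.cond, Measure.prod_smul_left, Measure.prod_smul_right,
    integral_smul_measure, integral_smul_measure]
  exact smul_nonpos_of_nonneg_of_nonpos ENNReal.toReal_nonneg
    (smul_nonpos_of_nonneg_of_nonpos ENNReal.toReal_nonneg
      (integral_sub_sq_sub_prod_gaussianReal_restrict_nonpos m hv hC))

lemma variance_cond_dirac (m : ℝ) {C : Set ℝ} (hpos : Measure.dirac m C ≠ 0) :
    Var[id; (Measure.dirac m)[|C]] = 0 := by
  have := cond_isProbabilityMeasure hpos
  have hae : ∀ᵐ x ∂(Measure.dirac m)[|C], x ∈ Icc m m :=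
    cond_absolutelyContinuous.ae_le ((ae_dirac_iff measurableSet_Icc).mpr ⟨le_rfl, le_rfl⟩)
  refine le_antisymm ?_ (variance_nonneg _ _)
  calc Var[id; (Measure.dirac m)[|C]]
      ≤ (m - ∫ x, id x ∂(Measure.dirac m)[|C]) * (∫ x, id x ∂(Measure.dirac m)[|C] - m) :=
        variance_le_sub_mul_sub hae aemeasurable_id
    _ ≤ 0 := by nlinarith [sq_nonneg (m - ∫ x, id x ∂(Measure.dirac m)[|C])]

/-- Kanter's variance reduction under convex truncation, 1-D Gaussian case:
if `X ~ N(m, σ²)` and `C ⊆ ℝ` is convex with `P(X ∈ C) > 0`, then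
`Var(X | X ∈ C) ≤ σ²`. -/
theorem stmt16 (m σ : ℝ) (C : Set ℝ) (hC : Convex ℝ C)
    (hpos : 0 < gaussianReal m (Real.toNNReal (σ ^ 2)) C) :
    variance id (ProbabilityTheory.cond (gaussianReal m (Real.toNNReal (σ ^ 2))) C)
      ≤ σ ^ 2 := by
  rcases eq_or_ne (σ ^ 2).toNNReal 0 with hv | hv
  · rw [hv, gaussianReal_zero_var] at hpos ⊢
    rw [variance_cond_dirac m hpos.ne']
    positivity
  · calc _ ≤ ((σ ^ 2).toNNReal : ℝ) := variance_cond_gaussianReal_le m hv hC hpos.ne'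
      _ = σ ^ 2 := Real.coe_toNNReal _ (sq_nonneg σ)
end

section
/- In the multivariate soft-truncated likelihood setting, the estimating equation for the approximate selective MLE holds: if o₁*(β̂) = argmin_{o₁} {(1/2)(o₁ - Aβ̂ - b)ᵀΣ̄⁻¹(o₁ - Aβ̂ - b) + B(o₁)} with B convex C², then the maximizer of the approximate log-likelihood η ↦ ηᵀβ̂ - h*(η, 0), with h(β', o₁) = (1/2)β'ᵀΣ⁻¹β' + (1/2)(o₁ - Aβ' - b)ᵀΣ̄⁻¹(o₁ - Aβ' - b) + B(o₁), corresponds to β^MLE = β̂ + ΣAᵀΣ̄⁻¹(Aβ̂ + b - o₁*(β̂)), i.e., the optimal natural parameter is η* = Σ⁻¹β̂ + AᵀΣ̄⁻¹(Aβ̂ + b - o₁*(β̂)). -/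
/-!
Let `g = Σ̄⁻¹(o₁* - Aβ̂ - b)`. Optimality of `o₁*` and convexity of `B` give the supporting
hyperplane `B o ≥ B o₁* - g ⬝ᵥ (o - o₁*)`. Replacing `B` by it, and writing `o₁ = Aβ' + b + r`,
bounds `η ⬝ᵥ β' - h(β', o₁)` by the sum of two concave quadratics, in `β'` and in `r`. For
`η = η*` their stationary points are `β̂` and `o₁* - Aβ̂ - b`, where the bound is attained, so
`(β̂, o₁*)` realises `h*(η*, 0)`; the Fenchel–Young inequality `h*(η, 0) ≥ η ⬝ᵥ β̂ - h(β̂, o₁*)`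
then shows that `η*` maximizes `η ⬝ᵥ β̂ - h*(η, 0)`. For the other `η` the same bound shows that
`h*(η, 0)` is finite, which is needed because `⨆` of an unbounded family of reals is `0`.
-/

open Matrix Set

/-- On the segment from `x₀` to `x`, the chord of `B` majorizes `B`, so `q` plus the chord still
has a one-sided minimum at `x₀`, where its derivative is therefore nonnegative. -/
theorem ConvexOn.sub_le_of_isMinOn_add {E : Type*} [AddCommGroup E] [Module ℝ E]
    {q B : E → ℝ} {x₀ x : E} {D : ℝ} (hB : ConvexOn ℝ univ B)
    (hmin : IsMinOn (fun y => q y + B y) univ x₀)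
    (hq : HasDerivAt (fun t : ℝ => q (x₀ + t • (x - x₀))) D 0) : B x₀ - D ≤ B x := by
  set φ : ℝ → ℝ := fun t => q (x₀ + t • (x - x₀)) + (B x₀ + t * (B x - B x₀))
  have hφmin : IsMinOn φ (Icc 0 1) 0 := by
    rintro t ⟨ht₀, ht₁⟩
    have hconv : B (x₀ + t • (x - x₀)) ≤ (1 - t) * B x₀ + t * B x := by
      have h := hB.2 (mem_univ x₀) (mem_univ x) (sub_nonneg.2 ht₁) ht₀ (sub_add_cancel 1 t)
      rwa [show (1 - t) • x₀ + t • x = x₀ + t • (x - x₀) by module] at h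
    have hle : q x₀ + B x₀ ≤ q (x₀ + t • (x - x₀)) + B (x₀ + t • (x - x₀)) :=
      hmin (mem_univ _)
    show φ 0 ≤ φ t
    simp only [φ, zero_smul, add_zero, zero_mul]
    linarith
  have hφ : HasDerivAt φ (D + (B x - B x₀)) 0 :=
    hq.add ((hasDerivAt_mul_const (B x - B x₀)).const_add (B x₀))
  have hone : (1 : ℝ) ∈ posTangentConeAt (Icc 0 1) 0 :=
    mem_posTangentConeAt_of_segment_subset (by simp [segment_eq_Icc])
  have := hφmin.localize.hasFDerivWithinAt_nonneg hφ.hasDerivWithinAt.hasFDerivWithinAt hone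
  simp only [ContinuousLinearMap.toSpanSingleton_apply, smul_eq_mul, one_mul] at this
  linarith

section QuadraticForm

variable {n : Type*} [Fintype n]

theorem Matrix.IsHermitian.dotProduct_mulVec_comm {M : Matrix n n ℝ} (hM : M.IsHermitian)
    (x y : n → ℝ) : x ⬝ᵥ M *ᵥ y = y ⬝ᵥ M *ᵥ x := by
  rw [dotProduct_mulVec, dotProduct_comm, ← mulVec_transpose,
    ← conjTranspose_eq_transpose_of_trivial, hM.eq]

/-- Completing the square. -/
theorem Matrix.PosSemidef.dotProduct_sub_half_le {K : Matrix n n ℝ} (hK : K.PosSemidef)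
    {c x₀ : n → ℝ} (hx₀ : K *ᵥ x₀ = c) (x : n → ℝ) :
    c ⬝ᵥ x - 1 / 2 * (x ⬝ᵥ K *ᵥ x) ≤ c ⬝ᵥ x₀ - 1 / 2 * (x₀ ⬝ᵥ K *ᵥ x₀) := by
  have hsq : 0 ≤ (x - x₀) ⬝ᵥ K *ᵥ (x - x₀) := by
    simpa using hK.dotProduct_mulVec_nonneg (x - x₀)
  have hsymm := hK.isHermitian.dotProduct_mulVec_comm x₀ x
  subst hx₀
  simp only [mulVec_sub, dotProduct_sub, sub_dotProduct] at hsq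
  simp only [dotProduct_comm (K *ᵥ x₀)]
  linarith

theorem Matrix.IsHermitian.hasDerivAt_half_dotProduct_mulVec_line {M : Matrix n n ℝ}
    (hM : M.IsHermitian) (u v : n → ℝ) :
    HasDerivAt (fun t : ℝ => 1 / 2 * ((u + t • v) ⬝ᵥ M *ᵥ (u + t • v))) ((M *ᵥ u) ⬝ᵥ v) 0 := by
  have hexpand : (fun t : ℝ => 1 / 2 * ((u + t • v) ⬝ᵥ M *ᵥ (u + t • v))) = fun t =>
      1 / 2 * (u ⬝ᵥ M *ᵥ u) + t * ((M *ᵥ u) ⬝ᵥ v) + t ^ 2 * (1 / 2 * (v ⬝ᵥ M *ᵥ v)) := by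
    funext t
    simp only [mulVec_add, mulVec_smul, dotProduct_add, add_dotProduct, dotProduct_smul,
      smul_dotProduct, smul_eq_mul]
    rw [hM.dotProduct_mulVec_comm u v, dotProduct_comm v]
    ring
  rw [hexpand]
  exact (((hasDerivAt_mul_const ((M *ᵥ u) ⬝ᵥ v)).const_add (1 / 2 * (u ⬝ᵥ M *ᵥ u))).add
    ((hasDerivAt_pow 2 (0 : ℝ)).mul_const (1 / 2 * (v ⬝ᵥ M *ᵥ v)))).congr_deriv (by simp)

theorem Matrix.IsHermitian.sub_dotProduct_le_of_isMinOn {μ : Matrix n n ℝ} (hμ : μ.IsHermitian)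
    {B : (n → ℝ) → ℝ} (hB : ConvexOn ℝ univ B) {c o₀ : n → ℝ}
    (hmin : IsMinOn (fun o => 1 / 2 * ((o - c) ⬝ᵥ μ *ᵥ (o - c)) + B o) univ o₀) (o : n → ℝ) :
    B o₀ - (μ *ᵥ (o₀ - c)) ⬝ᵥ (o - o₀) ≤ B o :=
  hB.sub_le_of_isMinOn_add hmin <| by
    simpa only [add_sub_right_comm] using
      hμ.hasDerivAt_half_dotProduct_mulVec_line (o₀ - c) (o - o₀)

end QuadraticForm

theorem isMaxOn_sub_iSup_sub {E P : Type*} (ℓ : E → P → ℝ) (f : P → ℝ) {p₀ : P} {η₀ : E}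
    (hbdd : ∀ η, BddAbove (range fun p => ℓ η p - f p))
    (hmax : IsMaxOn (fun p => ℓ η₀ p - f p) univ p₀) :
    IsMaxOn (fun η => ℓ η p₀ - ⨆ p, (ℓ η p - f p)) univ η₀ := by
  have : Nonempty P := ⟨p₀⟩
  refine isMaxOn_univ_iff.2 fun η => ?_
  have hη : ℓ η p₀ - f p₀ ≤ ⨆ p, (ℓ η p - f p) := le_ciSup (hbdd η) p₀
  have hη₀ : ⨆ p, (ℓ η₀ p - f p) = ℓ η₀ p₀ - f p₀ :=
    le_antisymm (ciSup_le fun p => hmax (mem_univ p)) (le_ciSup (hbdd η₀) p₀)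
  rw [hη₀]
  linarith

namespace SelectiveMLE

variable {d m : Type*} [Fintype d] [Fintype m]

/-- The function `h(β', o₁)` of the soft-truncated likelihood, with `K = Σ⁻¹` and `μ = Σ̄⁻¹`. -/
noncomputable def h (K : Matrix d d ℝ) (μ : Matrix m m ℝ) (A : Matrix m d ℝ) (b : m → ℝ)
    (B : (m → ℝ) → ℝ) (p : (d → ℝ) × (m → ℝ)) : ℝ :=
  1 / 2 * (p.1 ⬝ᵥ K *ᵥ p.1) + 1 / 2 * ((p.2 - A *ᵥ p.1 - b) ⬝ᵥ μ *ᵥ (p.2 - A *ᵥ p.1 - b))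
    + B p.2

variable {K : Matrix d d ℝ} {μ : Matrix m m ℝ} {A : Matrix m d ℝ} {b : m → ℝ}
  {B : (m → ℝ) → ℝ} {o₀ g : m → ℝ}

theorem dotProduct_fst_sub_h_le (hK : K.PosSemidef) (hμ : μ.PosSemidef)
    (hsupp : ∀ o, B o₀ - g ⬝ᵥ (o - o₀) ≤ B o) {η x₀ : d → ℝ} {r₀ : m → ℝ}
    (hx₀ : K *ᵥ x₀ = η + Aᵀ *ᵥ g) (hr₀ : μ *ᵥ r₀ = g) (p : (d → ℝ) × (m → ℝ)) :
    η ⬝ᵥ p.1 - h K μ A b B p ≤ (η + Aᵀ *ᵥ g) ⬝ᵥ x₀ - 1 / 2 * (x₀ ⬝ᵥ K *ᵥ x₀)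
      + (g ⬝ᵥ r₀ - 1 / 2 * (r₀ ⬝ᵥ μ *ᵥ r₀)) + g ⬝ᵥ (b - o₀) - B o₀ := by
  have h₁ := hK.dotProduct_sub_half_le hx₀ p.1
  have h₂ := hμ.dotProduct_sub_half_le hr₀ (p.2 - A *ᵥ p.1 - b)
  have h₃ := hsupp p.2
  have hsplit : g ⬝ᵥ (p.2 - o₀)
      = (Aᵀ *ᵥ g) ⬝ᵥ p.1 + g ⬝ᵥ (p.2 - A *ᵥ p.1 - b) + g ⬝ᵥ (b - o₀) := by
    rw [mulVec_transpose, ← dotProduct_mulVec]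
    simp only [dotProduct_sub]
    ring
  rw [add_dotProduct] at h₁
  unfold h
  linarith

theorem isMaxOn_dotProduct_fst_sub_h (hK : K.PosSemidef) (hμ : μ.PosSemidef)
    (hsupp : ∀ o, B o₀ - g ⬝ᵥ (o - o₀) ≤ B o) {η x₀ : d → ℝ}
    (hx₀ : K *ᵥ x₀ = η + Aᵀ *ᵥ g) (hg : μ *ᵥ (o₀ - A *ᵥ x₀ - b) = g) :
    IsMaxOn (fun p => η ⬝ᵥ p.1 - h K μ A b B p) univ (x₀, o₀) := by
  refine isMaxOn_univ_iff.2 fun p => ?_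
  have hle := dotProduct_fst_sub_h_le (b := b) hK hμ hsupp hx₀ hg p
  have hAg : (Aᵀ *ᵥ g) ⬝ᵥ x₀ = g ⬝ᵥ A *ᵥ x₀ := by
    rw [mulVec_transpose, ← dotProduct_mulVec]
  simp only [h, add_dotProduct, dotProduct_sub] at hle ⊢
  linarith

theorem bddAbove_range_dotProduct_fst_sub_h [DecidableEq d] [DecidableEq m] (hK : K.PosDef)
    (hμ : μ.PosDef) (hsupp : ∀ o, B o₀ - g ⬝ᵥ (o - o₀) ≤ B o) (η : d → ℝ) :
    BddAbove (range fun p => η ⬝ᵥ p.1 - h K μ A b B p) := by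
  obtain ⟨x₀, hx₀⟩ := mulVec_surjective_iff_isUnit.2 hK.isUnit (η + Aᵀ *ᵥ g)
  obtain ⟨r₀, hr₀⟩ := mulVec_surjective_iff_isUnit.2 hμ.isUnit g
  exact ⟨_, forall_mem_range.2 <|
    dotProduct_fst_sub_h_le hK.posSemidef hμ.posSemidef hsupp hx₀ hr₀⟩

end SelectiveMLE

open SelectiveMLE in
theorem stmt17_general {d m : ℕ} (S : Matrix (Fin d) (Fin d) ℝ) (Sb : Matrix (Fin m) (Fin m) ℝ)
    (hS : S.PosDef) (hSb : Sb.PosDef)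
    (A : Matrix (Fin m) (Fin d) ℝ) (b : Fin m → ℝ) (βhat : Fin d → ℝ)
    (Bf : (Fin m → ℝ) → ℝ) (hBconv : ConvexOn ℝ Set.univ Bf)
    (ostar : Fin m → ℝ)
    (hostar : IsMinOn (fun o =>
        (1 / 2) * ((o - A *ᵥ βhat - b) ⬝ᵥ (Sb⁻¹ *ᵥ (o - A *ᵥ βhat - b))) + Bf o)
        Set.univ ostar) :
    IsMaxOn (fun η : Fin d → ℝ =>
        η ⬝ᵥ βhat - ⨆ p : (Fin d → ℝ) × (Fin m → ℝ),
          (η ⬝ᵥ p.1 -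
            ((1 / 2) * (p.1 ⬝ᵥ (S⁻¹ *ᵥ p.1))
              + (1 / 2) * ((p.2 - A *ᵥ p.1 - b) ⬝ᵥ (Sb⁻¹ *ᵥ (p.2 - A *ᵥ p.1 - b)))
              + Bf p.2)))
      Set.univ
      (S⁻¹ *ᵥ βhat + Aᵀ *ᵥ (Sb⁻¹ *ᵥ (A *ᵥ βhat + b - ostar))) ∧
    S *ᵥ (S⁻¹ *ᵥ βhat + Aᵀ *ᵥ (Sb⁻¹ *ᵥ (A *ᵥ βhat + b - ostar)))
      = βhat + S *ᵥ (Aᵀ *ᵥ (Sb⁻¹ *ᵥ (A *ᵥ βhat + b - ostar))) := by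
  have hsupp : ∀ o, Bf ostar - (Sb⁻¹ *ᵥ (ostar - A *ᵥ βhat - b)) ⬝ᵥ (o - ostar) ≤ Bf o := by
    simpa only [sub_sub] using hSb.inv.isHermitian.sub_dotProduct_le_of_isMinOn hBconv
      (c := A *ᵥ βhat + b) (by simpa only [sub_sub] using hostar)
  have hstat : S⁻¹ *ᵥ βhat = S⁻¹ *ᵥ βhat + Aᵀ *ᵥ (Sb⁻¹ *ᵥ (A *ᵥ βhat + b - ostar))
      + Aᵀ *ᵥ (Sb⁻¹ *ᵥ (ostar - A *ᵥ βhat - b)) := by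
    have hcancel : A *ᵥ βhat + b - ostar + (ostar - A *ᵥ βhat - b) = 0 := by abel
    rw [add_assoc, ← mulVec_add, ← mulVec_add, hcancel, mulVec_zero, mulVec_zero, add_zero]
  have hmax := isMaxOn_dotProduct_fst_sub_h (b := b) hS.inv.posSemidef hSb.inv.posSemidef
    hsupp hstat rfl
  have hbdd := bddAbove_range_dotProduct_fst_sub_h (A := A) (b := b) hS.inv hSb.inv hsupp
  refine ⟨isMaxOn_sub_iSup_sub (fun η p => η ⬝ᵥ p.1) (h S⁻¹ Sb⁻¹ A b Bf) hbdd hmax, ?_⟩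
  rw [mulVec_add, mulVec_mulVec, mul_nonsing_inv _ ((isUnit_iff_isUnit_det S).1 hS.isUnit),
    one_mulVec]

/-- Estimating equation for the approximate selective MLE: with
`h(β', o₁) = ½β'ᵀΣ⁻¹β' + ½(o₁-Aβ'-b)ᵀΣ̄⁻¹(o₁-Aβ'-b) + B(o₁)` and
`o₁*(β̂) = argmin_{o₁} {½(o₁-Aβ̂-b)ᵀΣ̄⁻¹(o₁-Aβ̂-b) + B(o₁)}`, the function
`η ↦ ηᵀβ̂ - h*(η,0)` is maximized at `η* = Σ⁻¹β̂ + AᵀΣ̄⁻¹(Aβ̂ + b - o₁*(β̂))`,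
which corresponds to `β^MLE = Σ η* = β̂ + ΣAᵀΣ̄⁻¹(Aβ̂ + b - o₁*(β̂))`. -/
theorem stmt17 {d m : ℕ} (S : Matrix (Fin d) (Fin d) ℝ) (Sb : Matrix (Fin m) (Fin m) ℝ)
    (hS : S.PosDef) (hSb : Sb.PosDef)
    (A : Matrix (Fin m) (Fin d) ℝ) (b : Fin m → ℝ) (βhat : Fin d → ℝ)
    (Bf : (Fin m → ℝ) → ℝ) (hB : ContDiff ℝ 2 Bf) (hBconv : ConvexOn ℝ Set.univ Bf)
    (ostar : Fin m → ℝ)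
    (hostar : IsMinOn (fun o =>
        (1 / 2) * ((o - A *ᵥ βhat - b) ⬝ᵥ (Sb⁻¹ *ᵥ (o - A *ᵥ βhat - b))) + Bf o)
        Set.univ ostar) :
    IsMaxOn (fun η : Fin d → ℝ =>
        η ⬝ᵥ βhat - ⨆ p : (Fin d → ℝ) × (Fin m → ℝ),
          (η ⬝ᵥ p.1 -
            ((1 / 2) * (p.1 ⬝ᵥ (S⁻¹ *ᵥ p.1))
              + (1 / 2) * ((p.2 - A *ᵥ p.1 - b) ⬝ᵥ (Sb⁻¹ *ᵥ (p.2 - A *ᵥ p.1 - b)))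
              + Bf p.2)))
      Set.univ
      (S⁻¹ *ᵥ βhat + Aᵀ *ᵥ (Sb⁻¹ *ᵥ (A *ᵥ βhat + b - ostar))) ∧
    S *ᵥ (S⁻¹ *ᵥ βhat + Aᵀ *ᵥ (Sb⁻¹ *ᵥ (A *ᵥ βhat + b - ostar)))
      = βhat + S *ᵥ (Aᵀ *ᵥ (Sb⁻¹ *ᵥ (A *ᵥ βhat + b - ostar))) :=
  stmt17_general S Sb hS hSb A b βhat Bf hBconv ostar hostar
end
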